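/- arXiv:1812.05909 — 3 statements merged into one kernel-verified Lean document; each statement's English description precedes it below -/
import Mathlib

section
/- Let X be a real random variable with E|X| ∈ (0,∞), EX = 0, and define π₊(dx) = (2/E|X|)·1_{x ≥ 0}·P(X > x) dx on [0,∞). Define the Markov kernel Q on [0,∞) by Q(x, dy) = P(X ∈ dy + x | X ≥ x) whenever P(X ≥ x) > 0, and Q(x, ·) = δ₀ otherwise. Then Q is reversible with respect to π₊: the measure π₊(dx) Q(x, dy) on [0,∞)² is symmetric in (x, y). -/
/-!
Off a countable set of levels `x`, `P(X > x) = P(X ≥ x)`; and for `B ⊆ [0,∞)` the event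
`X - x ∈ B` forces `X ≥ x`. Hence the density of `π₊` at `x` times `Q(x, B)` is `P(X - x ∈ B)`,
and by Tonelli `∫_A Q(x, B) π₊(dx)` is a constant times `E[Leb{x ∈ A | X - x ∈ B}]`.
The reflection `x ↦ X - x` preserves Lebesgue measure and exchanges the roles of `A` and `B`.
-/

open MeasureTheory Classical Set ENNReal

theorem measure_preimage_sub_left_inter_comm {G : Type*} [MeasurableSpace G] [AddCommGroup G]
    [MeasurableAdd G] [MeasurableNeg G] (ν : Measure G) [ν.IsAddLeftInvariant] [ν.IsNegInvariant]
    (a : G) (s t : Set G) :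
    ν ((a - ·) ⁻¹' t ∩ s) = ν ((a - ·) ⁻¹' s ∩ t) := by
  rw [← (Measure.measurePreserving_sub_left ν a).measure_preimage_emb
    (MeasurableEquiv.subLeft a).measurableEmbedding]
  congr 1
  ext x
  simp [and_comm]

theorem lintegral_measure_sub_mem_comm {Ω : Type*} [MeasurableSpace Ω] (μ : Measure Ω)
    [SFinite μ] (ν : Measure ℝ) [SFinite ν] {X : Ω → ℝ} (hX : Measurable X) {B : Set ℝ}
    (hB : MeasurableSet B) :
    ∫⁻ x, μ {ω | X ω - x ∈ B} ∂ν = ∫⁻ ω, ν {x | X ω - x ∈ B} ∂μ := by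
  have hs : MeasurableSet {p : ℝ × Ω | X p.2 - p.1 ∈ B} :=
    hB.preimage ((hX.comp measurable_snd).sub measurable_fst)
  exact (Measure.prod_apply hs).symm.trans (Measure.prod_apply_symm hs)

section UpcrossingKernel

variable {Ω : Type*} [MeasurableSpace Ω] {μ : Measure Ω} [IsFiniteMeasure μ] {X : Ω → ℝ}
  {Q : ℝ → Set ℝ → ℝ≥0∞}

theorem tail_mul_kernel_ae_eq
    (hQ : ∀ x B, Q x B =
      if μ {ω | x ≤ X ω} ≠ 0 then
        μ {ω | X ω - x ∈ B ∧ x ≤ X ω} / μ {ω | x ≤ X ω}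
      else (if (0:ℝ) ∈ B then 1 else 0))
    {B : Set ℝ} (hB : B ⊆ Ici 0) :
    ∀ᵐ x, μ {ω | x < X ω} * Q x B = μ {ω | X ω - x ∈ B} := by
  filter_upwards [meas_le_ae_eq_meas_lt μ volume X] with x hx
  have hsub : {ω | X ω - x ∈ B} ⊆ {ω | x ≤ X ω} := fun ω hω =>
    show x ≤ X ω from sub_nonneg.mp (hB hω)
  rw [← hx]
  by_cases h0 : μ {ω | x ≤ X ω} = 0
  · rw [h0, zero_mul, measure_mono_null hsub h0]
  · rw [hQ, if_pos h0, ofPred_and, inter_eq_left.mpr hsub,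
      ENNReal.mul_div_cancel h0 (measure_ne_top μ _)]

theorem setLIntegral_kernel_eq_lintegral_volume (hX : Measurable X)
    (hQ : ∀ x B, Q x B =
      if μ {ω | x ≤ X ω} ≠ 0 then
        μ {ω | X ω - x ∈ B ∧ x ≤ X ω} / μ {ω | x ≤ X ω}
      else (if (0:ℝ) ∈ B then 1 else 0))
    {π : Measure ℝ} {c : ℝ≥0∞} (hc : c ≠ ∞)
    (hπ : π = volume.withDensity
      (fun x => c * (Ici (0:ℝ)).indicator (fun y => μ {ω | y < X ω}) x))
    {A B : Set ℝ} (hA : MeasurableSet A) (hB : MeasurableSet B)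
    (hA0 : A ⊆ Ici 0) (hB0 : B ⊆ Ici 0) :
    ∫⁻ x in A, Q x B ∂π = c * ∫⁻ ω, volume ((X ω - ·) ⁻¹' B ∩ A) ∂μ := by
  have htail : Measurable fun y : ℝ => μ {ω | y < X ω} :=
    Antitone.measurable fun a b hab => measure_mono fun ω hω => hab.trans_lt hω
  have hdensity_lt_top : ∀ x, c * (Ici (0:ℝ)).indicator (fun y => μ {ω | y < X ω}) x < ∞ :=
    fun x => mul_lt_top hc.lt_top ((indicator_le_self _ _ x).trans_lt (measure_lt_top μ _))
  calc ∫⁻ x in A, Q x B ∂π = ∫⁻ x in A, c * (μ {ω | x < X ω} * Q x B) := by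
        rw [hπ, restrict_withDensity hA, lintegral_withDensity_eq_lintegral_mul_non_measurable _
          ((htail.indicator measurableSet_Ici).const_mul c) (ae_of_all _ hdensity_lt_top)]
        refine setLIntegral_congr_fun hA fun x hx => ?_
        simp only [Pi.mul_apply, indicator_of_mem (hA0 hx), mul_assoc]
    _ = c * ∫⁻ x in A, μ {ω | X ω - x ∈ B} := by
        rw [lintegral_const_mul' _ _ hc]
        exact congrArg _ (lintegral_congr_ae (ae_restrict_of_ae (tail_mul_kernel_ae_eq hQ hB0)))
    _ = c * ∫⁻ ω, volume ((X ω - ·) ⁻¹' B ∩ A) ∂μ := by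
        rw [lintegral_measure_sub_mem_comm μ _ hX hB]
        simp_rw [Measure.restrict_apply' hA]
        rfl

end UpcrossingKernel

theorem upcrossing_kernel_reversible_general
    {Ω : Type*} [MeasurableSpace Ω] (μ : Measure Ω) [IsProbabilityMeasure μ]
    (X : Ω → ℝ) (hX : Measurable X)
    (π : Measure ℝ)
    (hπ : π = volume.withDensity
      (fun x => ENNReal.ofReal (2 / ∫ ω, |X ω| ∂μ) *
        Set.indicator (Set.Ici (0:ℝ)) (fun y => μ {ω | y < X ω}) x))
    (Q : ℝ → Set ℝ → ENNReal)
    (hQ : ∀ x B, Q x B =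
      if μ {ω | x ≤ X ω} ≠ 0 then
        μ {ω | X ω - x ∈ B ∧ x ≤ X ω} / μ {ω | x ≤ X ω}
      else (if (0:ℝ) ∈ B then 1 else 0)) :
    ∀ A B : Set ℝ, MeasurableSet A → MeasurableSet B →
      A ⊆ Set.Ici (0:ℝ) → B ⊆ Set.Ici (0:ℝ) →
      ∫⁻ x in A, Q x B ∂π = ∫⁻ y in B, Q y A ∂π := by
  intro A B hA hB hA0 hB0
  rw [setLIntegral_kernel_eq_lintegral_volume hX hQ ofReal_ne_top hπ hA hB hA0 hB0,
    setLIntegral_kernel_eq_lintegral_volume hX hQ ofReal_ne_top hπ hB hA hB0 hA0]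
  simp_rw [measure_preimage_sub_left_inter_comm volume _ B A]

/-- Let `X` be a mean-zero integrable real random variable with
`E|X| ∈ (0,∞)` and let `π₊(dx) = (2/E|X|)·1_{x ≥ 0}·P(X > x) dx`.  Define the kernel `Q`
on `[0,∞)` by `Q(x, B) = P(X − x ∈ B | X ≥ x)` when `P(X ≥ x) > 0` and `Q(x, ·) = δ₀`
otherwise.  Then `Q` is reversible with respect to `π₊`:
`∫_A Q(x, B) π₊(dx) = ∫_B Q(y, A) π₊(dy)` for all Borel `A, B ⊆ [0,∞)`. -/
theorem upcrossing_kernel_reversible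
    {Ω : Type*} [MeasurableSpace Ω] (μ : Measure Ω) [IsProbabilityMeasure μ]
    (X : Ω → ℝ) (hX : Measurable X) (hInt : Integrable X μ)
    (hpos : 0 < ∫ ω, |X ω| ∂μ) (hmean : ∫ ω, X ω ∂μ = 0)
    (π : Measure ℝ)
    (hπ : π = volume.withDensity
      (fun x => ENNReal.ofReal (2 / ∫ ω, |X ω| ∂μ) *
        Set.indicator (Set.Ici (0:ℝ)) (fun y => μ {ω | y < X ω}) x))
    (Q : ℝ → Set ℝ → ENNReal)
    (hQ : ∀ x B, Q x B =
      if μ {ω | x ≤ X ω} ≠ 0 then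
        μ {ω | X ω - x ∈ B ∧ x ≤ X ω} / μ {ω | x ≤ X ω}
      else (if (0:ℝ) ∈ B then 1 else 0)) :
    ∀ A B : Set ℝ, MeasurableSet A → MeasurableSet B →
      A ⊆ Set.Ici (0:ℝ) → B ⊆ Set.Ici (0:ℝ) →
      ∫⁻ x in A, Q x B ∂π = ∫⁻ y in B, Q y A ∂π :=
  upcrossing_kernel_reversible_general μ X hX π hπ Q hQ
end

section
/- Let S'_n = X₁ + ⋯ + X_n be a random walk started at 0 with i.i.d. increments, and suppose P^s(S'_k ∈ ℝ) = ρ < 1 for some k ≥ 1, where μ^s denotes the singular part of a measure with respect to Lebesgue measure. Then for every m ≥ 1, P^s(S'_m ∈ ℝ) ≤ ρ^{⌊m/k⌋}. In particular the total mass of the singular part of the law of S'_m decays geometrically in m. -/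
/-!
Write `ν n` for the law of `S'_n`. Independence and identical distribution of the increments
give `ν (a + b) = ν a ∗ ν b`. Splitting each factor into its singular and absolutely continuous
parts, every cross term of the convolution is absolutely continuous, because Lebesgue measure is
translation invariant; so the singular part of `ν a ∗ ν b` is at most the convolution of the
singular parts, whose mass is the product of their masses. Hence the singular mass of `ν n` is
submultiplicative in `n` and bounded by `1`, and writing `m = k ⌊m/k⌋ + r` gives `ρ ^ ⌊m/k⌋`.
-/

open MeasureTheory ProbabilityTheory

namespace MeasureTheory.Measure

variable {G : Type*} [MeasurableSpace G] [AddCommMonoid G] [MeasurableAdd₂ G]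

theorem conv_apply_univ (μ ν : Measure G) [SFinite ν] :
    (μ ∗ ν) Set.univ = μ Set.univ * ν Set.univ := by
  rw [conv, map_apply measurable_add MeasurableSet.univ, Set.preimage_univ, ← Set.univ_prod_univ,
    prod_prod]

theorem singularPart_conv_le (ℓ : Measure G) [ℓ.IsAddLeftInvariant] [SigmaFinite ℓ]
    (μ ν : Measure G) [IsFiniteMeasure μ] [IsFiniteMeasure ν] :
    (μ ∗ ν).singularPart ℓ ≤ μ.singularPart ℓ ∗ ν.singularPart ℓ := by
  set μa := ℓ.withDensity (μ.rnDeriv ℓ)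
  set νa := ℓ.withDensity (ν.rnDeriv ℓ)
  have hsplit : μ ∗ ν = μ.singularPart ℓ ∗ ν.singularPart ℓ
      + (μ.singularPart ℓ ∗ νa + ν ∗ μa) := by
    calc μ ∗ ν = (μ.singularPart ℓ + μa) ∗ ν := by rw [singularPart_add_rnDeriv]
      _ = μ.singularPart ℓ ∗ (ν.singularPart ℓ + νa) + μa ∗ ν := by
        rw [add_conv, singularPart_add_rnDeriv]
      _ = _ := by rw [conv_add, conv_comm μa, add_assoc]
  have hac : μ.singularPart ℓ ∗ νa + ν ∗ μa ≪ ℓ :=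
    (conv_absolutelyContinuous (withDensity_absolutelyContinuous _ _)).add_left
      (conv_absolutelyContinuous (withDensity_absolutelyContinuous _ _))
  rw [hsplit, singularPart_add, singularPart_eq_zero_of_ac hac, add_zero]
  exact singularPart_le _ _

end MeasureTheory.Measure

namespace ProbabilityTheory

variable {Ω M : Type*} [MeasurableSpace Ω] {μ : Measure Ω}
  [MeasurableSpace M] [AddCommMonoid M] [MeasurableAdd₂ M] {X : ℕ → Ω → M}

theorem iIndepFun.map_sum_range_succ [IsFiniteMeasure μ] (hX : ∀ i, Measurable (X i)) (hindep : iIndepFun X μ)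
    (n : ℕ) :
    μ.map (fun ω => ∑ i ∈ Finset.range (n + 1), X i ω)
      = μ.map (fun ω => ∑ i ∈ Finset.range n, X i ω) ∗ μ.map (X n) := by
  simp_rw [Finset.sum_range_succ, ← Finset.sum_apply]
  exact (hindep.indepFun_sum_range_succ hX n).map_add_eq_map_conv_map
    (by fun_prop) (hX n)

theorem iIndepFun.map_sum_range_add [IsProbabilityMeasure μ] (hX : ∀ i, Measurable (X i))
    (hindep : iIndepFun X μ) (hident : ∀ i, μ.map (X i) = μ.map (X 0)) (a b : ℕ) :
    μ.map (fun ω => ∑ i ∈ Finset.range (a + b), X i ω)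
      = μ.map (fun ω => ∑ i ∈ Finset.range a, X i ω)
        ∗ μ.map (fun ω => ∑ i ∈ Finset.range b, X i ω) := by
  induction b with
  | zero => simp
  | succ b ih =>
    rw [← add_assoc, hindep.map_sum_range_succ hX, ih, hindep.map_sum_range_succ hX,
      Measure.conv_assoc, hident (a + b), hident b]

end ProbabilityTheory

theorem le_pow_div_of_le_mul {α : Type*} [CommMonoid α] [PartialOrder α] [IsOrderedMonoid α]
    {f : ℕ → α} (hmul : ∀ a b, f (a + b) ≤ f a * f b) (hle : ∀ n, f n ≤ 1) (k m : ℕ) :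
    f m ≤ f k ^ (m / k) := by
  have key : ∀ q r, f (k * q + r) ≤ f k ^ q := by
    intro q r
    induction q with
    | zero => simpa using hle r
    | succ q ih =>
      calc f (k * (q + 1) + r) = f (k + (k * q + r)) := by ring_nf
        _ ≤ f k * f k ^ q := (hmul _ _).trans (mul_le_mul' le_rfl ih)
        _ = f k ^ (q + 1) := (pow_succ' _ _).symm
  simpa [Nat.div_add_mod] using key (m / k) (m % k)

theorem singular_part_geometric_decay_general
    {Ω : Type*} [MeasurableSpace Ω] (μ : Measure Ω) [IsProbabilityMeasure μ]
    (X : ℕ → Ω → ℝ) (hXmeas : ∀ i, Measurable (X i))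
    (hIndep : iIndepFun X μ)
    (hIdent : ∀ i, Measure.map (X i) μ = Measure.map (X 0) μ)
    (k : ℕ) (ρ : ENNReal)
    (hρ : ((Measure.map (fun ω => ∑ i ∈ Finset.range k, X i ω) μ).singularPart
      volume) Set.univ = ρ) :
    ∀ m : ℕ, 1 ≤ m →
      ((Measure.map (fun ω => ∑ i ∈ Finset.range m, X i ω) μ).singularPart
        volume) Set.univ ≤ ρ ^ (m / k) := by
  intro m _
  subst hρ
  refine le_pow_div_of_le_mul (f := fun n =>
    (μ.map (fun ω => ∑ i ∈ Finset.range n, X i ω)).singularPart volume Set.univ)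
    (fun a b => ?_) (fun n => ?_) k m
  · rw [hIndep.map_sum_range_add hXmeas hIdent, ← Measure.conv_apply_univ]
    exact Measure.singularPart_conv_le volume _ _ Set.univ
  · have : IsProbabilityMeasure (μ.map fun ω => ∑ i ∈ Finset.range n, X i ω) :=
      Measure.isProbabilityMeasure_map (by fun_prop)
    exact (Measure.singularPart_le _ _ Set.univ).trans_eq measure_univ

/-- Let `S'_m = X₁ + ⋯ + X_m` be a zero-started random walk with i.i.d.
increments and suppose the total mass `ρ` of the singular part (w.r.t. Lebesgue measure)
of the law of `S'_k` satisfies `ρ < 1` for some `k ≥ 1`.  Then for every `m ≥ 1` the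
total mass of the singular part of the law of `S'_m` is at most `ρ^⌊m/k⌋`: it decays
geometrically in `m`. -/
theorem singular_part_geometric_decay
    {Ω : Type*} [MeasurableSpace Ω] (μ : Measure Ω) [IsProbabilityMeasure μ]
    (X : ℕ → Ω → ℝ) (hXmeas : ∀ i, Measurable (X i))
    (hIndep : iIndepFun X μ)
    (hIdent : ∀ i, Measure.map (X i) μ = Measure.map (X 0) μ)
    (k : ℕ) (hk : 1 ≤ k) (ρ : ENNReal)
    (hρ : ((Measure.map (fun ω => ∑ i ∈ Finset.range k, X i ω) μ).singularPart
      volume) Set.univ = ρ)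
    (hρlt : ρ < 1) :
    ∀ m : ℕ, 1 ≤ m →
      ((Measure.map (fun ω => ∑ i ∈ Finset.range m, X i ω) μ).singularPart
        volume) Set.univ ≤ ρ ^ (m / k) :=
  singular_part_geometric_decay_general μ X hXmeas hIndep hIdent k ρ hρ
end

section
/- Let S be an integer-valued random walk with i.i.d. increments whose state space group is ℤ (span d = 1), started at x ∈ ℤ, and suppose EX₁ = 0 with E|X₁| ∈ (0,∞). Let T₁ = inf{k ≥ 1 : S_{k−1} < 0, S_k ≥ 0} be the first up-crossing time of level 0 and O₁ = S_{T₁} the overshoot. Then for every y ∈ {z ∈ ℤ, z ≥ 0 : P(X₁ > z) > 0}, we have P_x(O₁ = y) > 0. -/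
/-!
Since the mean is zero and `X₁` charges `(y, ∞)` with `y ≥ 0`, it also charges a negative
atom; together with the span condition the atoms then generate `ℤ` as a monoid. Take an atom
`b > y` and write `y - b - x` as a sum of atoms listed in increasing order. The walk from `x`
taking these steps never up-crosses `0`: a down-step cannot, and once a step is positive all
later ones are, so the walk stays below its final value `y - b < 0`. The last step `b` then
carries it across `0` exactly to `y`, and by independence this finite trajectory has positive
probability.
-/

open MeasureTheory ProbabilityTheory Finset

lemma exists_measure_preimage_singleton_ne_zero {Ω β : Type*} [MeasurableSpace Ω] [Countable β]
    {μ : Measure Ω} (Y : Ω → β) {s : Set β} (h : μ (Y ⁻¹' s) ≠ 0) :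
    ∃ z ∈ s, μ (Y ⁻¹' {z}) ≠ 0 := by
  by_contra! hnull
  rw [← Set.biUnion_preimage_singleton] at h
  exact h ((measure_biUnion_null_iff s.to_countable).2 hnull)

lemma measure_neg_ne_zero_of_integral_eq_zero {Ω : Type*} [MeasurableSpace Ω]
    {μ : Measure Ω} {f : Ω → ℝ} (hf : Integrable f μ) (h0 : ∫ ω, f ω ∂μ = 0)
    (hpos : μ {ω | 0 < f ω} ≠ 0) : μ {ω | f ω < 0} ≠ 0 := by
  intro hneg
  have hnonneg : 0 ≤ᵐ[μ] f := by
    rw [Filter.EventuallyLE, ae_iff]; simpa using hneg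
  have hzero : f =ᵐ[μ] 0 := (integral_eq_zero_iff_of_nonneg_ae hnonneg hf).1 h0
  exact hpos (measure_mono_null (fun ω (h : 0 < f ω) => h.ne') (ae_iff.1 hzero))

lemma measure_biInter_preimage_singleton_ne_zero {Ω β : Type*} [MeasurableSpace Ω]
    [MeasurableSpace β] [MeasurableSingletonClass β] {μ : Measure Ω} {X : ℕ → Ω → β}
    (hX : ∀ i, Measurable (X i)) (hIndep : iIndepFun X μ)
    (hIdent : ∀ i, μ.map (X i) = μ.map (X 0)) {e : ℕ → β} {n : ℕ}
    (he : ∀ i < n, μ (X 0 ⁻¹' {e i}) ≠ 0) :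
    μ (⋂ i ∈ range n, X i ⁻¹' {e i}) ≠ 0 := by
  rw [hIndep.meas_biInter fun i _ => ⟨{e i}, measurableSet_singleton _, rfl⟩, prod_ne_zero_iff]
  intro i hi
  rw [← Measure.map_apply (hX i) (measurableSet_singleton _), hIdent,
    Measure.map_apply (hX 0) (measurableSet_singleton _)]
  exact he i (mem_range.1 hi)

lemma Int.neg_mem_of_pos_mem_of_neg_mem {M : AddSubmonoid ℤ} {p q : ℤ} (hp : p ∈ M)
    (hp0 : 0 < p) (hq : q ∈ M) (hq0 : q < 0) {a : ℤ} (ha : a ∈ M) : -a ∈ M := by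
  rcases le_or_gt 0 a with h | h
  · have : -a = a.toNat • q + (-q - 1).toNat • a := by
      rw [nsmul_eq_mul, nsmul_eq_mul, Int.toNat_of_nonneg h,
        Int.toNat_of_nonneg (by omega : 0 ≤ -q - 1)]
      ring
    exact this ▸ add_mem (AddSubmonoid.nsmul_mem _ hq _) (AddSubmonoid.nsmul_mem _ ha _)
  · have : -a = (-a).toNat • p + (p - 1).toNat • a := by
      rw [nsmul_eq_mul, nsmul_eq_mul, Int.toNat_of_nonneg (by omega : 0 ≤ -a),
        Int.toNat_of_nonneg (by omega : 0 ≤ p - 1)]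
      ring
    exact this ▸ add_mem (AddSubmonoid.nsmul_mem _ hp _) (AddSubmonoid.nsmul_mem _ ha _)

lemma Int.addSubmonoid_closure_eq_top {A : Set ℤ} (hA : AddSubgroup.closure A = ⊤) {p q : ℤ}
    (hp : p ∈ A) (hp0 : 0 < p) (hq : q ∈ A) (hq0 : q < 0) : AddSubmonoid.closure A = ⊤ := by
  have hneg : -A ⊆ AddSubmonoid.closure A := fun a ha => by
    simpa using Int.neg_mem_of_pos_mem_of_neg_mem (AddSubmonoid.subset_closure hp) hp0
      (AddSubmonoid.subset_closure hq) hq0 (AddSubmonoid.subset_closure ha)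
  rw [eq_top_iff, ← AddSubgroup.top_toAddSubmonoid, ← hA, AddSubgroup.closure_toAddSubmonoid]
  exact AddSubmonoid.closure_le.2 (Set.union_subset AddSubmonoid.subset_closure hneg)

lemma exists_monotoneOn_sum_eq_of_mem_closure {α : Type*} [AddCommMonoid α] [LinearOrder α]
    {A : Set α} {m : α} (hm : m ∈ AddSubmonoid.closure A) :
    ∃ (n : ℕ) (d : ℕ → α), (∀ i < n, d i ∈ A) ∧ MonotoneOn d (Set.Iio n) ∧
      ∑ i ∈ range n, d i = m := by
  obtain ⟨l, hlA, rfl⟩ := AddSubmonoid.exists_list_of_mem_closure hm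
  set l' := l.mergeSort (· ≤ ·)
  have hperm : l'.Perm l := List.mergeSort_perm _ _
  have hsorted : l'.Pairwise (· ≤ ·) := List.pairwise_mergeSort' _ l
  refine ⟨l'.length, fun i => l'.getD i 0, fun i hi => ?_, fun i hi j hj hij => ?_, ?_⟩
  · dsimp only
    rw [List.getD_eq_getElem _ _ hi]
    exact hlA _ (hperm.subset (List.getElem_mem hi))
  · dsimp only
    rw [List.getD_eq_getElem _ _ hi, List.getD_eq_getElem _ _ hj]
    exact hsorted.rel_get_of_le hij
  · rw [← hperm.sum_eq, ← Fin.sum_univ_eq_sum_range]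
    conv_rhs => rw [← List.ofFn_getElem (xs := l'), List.sum_ofFn]
    exact Fintype.sum_congr _ _ fun i => List.getD_eq_getElem _ _ i.2

noncomputable def firstUpcrossingTime (s : ℕ → ℤ) : ℕ :=
  sInf {k : ℕ | 1 ≤ k ∧ s (k - 1) < 0 ∧ 0 ≤ s k}

lemma firstUpcrossingTime_eq {s : ℕ → ℤ} {n : ℕ}
    (hbefore : ∀ k < n, ¬(s k < 0 ∧ 0 ≤ s (k + 1))) (hn : s n < 0) (hn' : 0 ≤ s (n + 1)) :
    firstUpcrossingTime s = n + 1 := by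
  have hmem : n + 1 ∈ {k : ℕ | 1 ≤ k ∧ s (k - 1) < 0 ∧ 0 ≤ s k} := ⟨by omega, hn, hn'⟩
  refine le_antisymm (Nat.sInf_le hmem) (le_csInf ⟨_, hmem⟩ ?_)
  rintro _ ⟨hk, hbelow, habove⟩
  obtain ⟨j, rfl⟩ : ∃ j, _ = j + 1 := Nat.exists_eq_add_of_le' hk
  by_contra! hj
  exact hbefore j (by omega) ⟨hbelow, habove⟩

lemma not_upcrossing_of_monotoneOn {d : ℕ → ℤ} {n : ℕ} (hd : MonotoneOn d (Set.Iio n))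
    {x : ℤ} (hend : x + ∑ i ∈ range n, d i < 0) {k : ℕ} (hk : k < n) :
    ¬(x + ∑ i ∈ range k, d i < 0 ∧ 0 ≤ x + ∑ i ∈ range (k + 1), d i) := by
  rintro ⟨hbelow, habove⟩
  -- the up-crossing step is positive, hence so are all later steps: the walk cannot end below 0
  have htail : 0 ≤ ∑ i ∈ Ico (k + 1) n, d i := by
    have hdk : 0 < d k := by rw [sum_range_succ] at habove; omega
    refine sum_nonneg fun i hi => hdk.le.trans (hd hk (mem_Ico.1 hi).2 ?_)
    have := (mem_Ico.1 hi).1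
    omega
  have := sum_range_add_sum_Ico d (show k + 1 ≤ n by omega)
  omega

lemma exists_steps_firstUpcrossingTime_eq {A : Set ℤ} (hA : AddSubmonoid.closure A = ⊤)
    (x : ℤ) {y b : ℤ} (hy : 0 ≤ y) (hb : b ∈ A) (hyb : y < b) :
    ∃ (n : ℕ) (e : ℕ → ℤ), (∀ i < n + 1, e i ∈ A) ∧
      ∀ s : ℕ → ℤ, (∀ k ≤ n + 1, s k = x + ∑ i ∈ range k, e i) →
        firstUpcrossingTime s = n + 1 ∧ s (n + 1) = y := by
  obtain ⟨n, d, hdA, hd, hdsum⟩ :=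
    exists_monotoneOn_sum_eq_of_mem_closure (hA ▸ AddSubmonoid.mem_top (y - b - x))
  set e : ℕ → ℤ := fun i => if i < n then d i else b
  have he_sum : ∑ i ∈ range n, e i = y - b - x :=
    (sum_congr rfl fun i hi => if_pos (mem_range.1 hi)).trans hdsum
  have he_last : ∑ i ∈ range (n + 1), e i = y - x := by
    rw [sum_range_succ, he_sum, show e n = b from if_neg (lt_irrefl n)]
    ring
  refine ⟨n, e, fun i hi => ?_, fun s hs => ?_⟩
  · by_cases hin : i < n
    · simpa [e, hin] using hdA i hin
    · simpa [e, hin] using hb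
  have hend : s (n + 1) = y := by rw [hs _ le_rfl, he_last]; ring
  refine ⟨firstUpcrossingTime_eq (fun k hk => ?_) ?_ (hend ▸ hy), hend⟩
  · rw [hs k (by omega), hs (k + 1) (by omega)]
    exact not_upcrossing_of_monotoneOn (d := e) (hd.congr fun i hi => (if_pos hi).symm)
      (by rw [he_sum]; omega) hk
  · rw [hs n (by omega), he_sum]
    omega

theorem arithmetic_overshoot_positive_probability_general
    {Ω : Type*} [MeasurableSpace Ω] (μ : Measure Ω)
    (X : ℕ → Ω → ℤ) (hXmeas : ∀ i, Measurable (X i))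
    (hIndep : iIndepFun X μ)
    (hIdent : ∀ i, Measure.map (X i) μ = Measure.map (X 0) μ)
    (hInt : Integrable (fun ω => (X 0 ω : ℝ)) μ)
    (hmean : ∫ ω, (X 0 ω : ℝ) ∂μ = 0)
    (hspan : AddSubgroup.closure {z : ℤ | μ {ω | X 0 ω = z} ≠ 0} = ⊤)
    (x : ℤ)
    (S : ℕ → Ω → ℤ) (hS : ∀ n ω, S n ω = x + ∑ i ∈ Finset.range n, X i ω)
    (T : Ω → ℕ)
    (hT : ∀ ω, T ω = sInf {k : ℕ | 1 ≤ k ∧ S (k - 1) ω < 0 ∧ 0 ≤ S k ω}) :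
    ∀ y : ℤ, 0 ≤ y → μ {ω | y < X 0 ω} ≠ 0 →
      0 < μ {ω | S (T ω) ω = y} := by
  intro y hy hjump
  obtain ⟨b, hyb, hbA⟩ := exists_measure_preimage_singleton_ne_zero (X 0) (s := Set.Ioi y) hjump
  have hdown : μ {ω | X 0 ω < 0} ≠ 0 := by
    simpa using measure_neg_ne_zero_of_integral_eq_zero hInt hmean fun h => hjump <|
      measure_mono_null
        (fun ω (hω : y < X 0 ω) => show (0 : ℝ) < X 0 ω by exact_mod_cast hy.trans_lt hω) h
  obtain ⟨q, hq0, hqA⟩ := exists_measure_preimage_singleton_ne_zero (X 0) (s := Set.Iio 0) hdown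
  obtain ⟨n, e, heA, hpath⟩ := exists_steps_firstUpcrossingTime_eq
    (Int.addSubmonoid_closure_eq_top hspan hbA (hy.trans_lt hyb) hqA hq0) x hy hbA hyb
  refine pos_iff_ne_zero.2 fun h =>
    measure_biInter_preimage_singleton_ne_zero hXmeas hIndep hIdent heA (measure_mono_null ?_ h)
  intro ω hω
  obtain ⟨hTω, hSy⟩ := hpath (S · ω) fun k hk => by
    rw [hS]
    exact congrArg _ <| sum_congr rfl fun i hi =>
      Set.mem_iInter₂.1 hω i (mem_range.2 (by have := mem_range.1 hi; omega))
  have hTn : T ω = n + 1 := (hT ω).trans hTω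
  show S (T ω) ω = y
  rwa [hTn]

/-- Let `S` be an integer-valued mean-zero random walk started at
`x ∈ ℤ` whose increment distribution generates all of `ℤ` (span `d = 1`).  Let
`T₁ = inf{k ≥ 1 : S_{k−1} < 0, S_k ≥ 0}` be the first up-crossing time of level `0` and
`O₁ = S_{T₁}` the overshoot.  Then for every `y ≥ 0` with `P(X₁ > y) > 0` we have
`P_x(O₁ = y) > 0`. -/
theorem arithmetic_overshoot_positive_probability
    {Ω : Type*} [MeasurableSpace Ω] (μ : Measure Ω) [IsProbabilityMeasure μ]
    (X : ℕ → Ω → ℤ) (hXmeas : ∀ i, Measurable (X i))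
    (hIndep : iIndepFun X μ)
    (hIdent : ∀ i, Measure.map (X i) μ = Measure.map (X 0) μ)
    (hInt : Integrable (fun ω => (X 0 ω : ℝ)) μ)
    (hmean : ∫ ω, (X 0 ω : ℝ) ∂μ = 0)
    (hpos : 0 < ∫ ω, |(X 0 ω : ℝ)| ∂μ)
    (hspan : AddSubgroup.closure {z : ℤ | μ {ω | X 0 ω = z} ≠ 0} = ⊤)
    (x : ℤ)
    (S : ℕ → Ω → ℤ) (hS : ∀ n ω, S n ω = x + ∑ i ∈ Finset.range n, X i ω)
    (T : Ω → ℕ)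
    (hT : ∀ ω, T ω = sInf {k : ℕ | 1 ≤ k ∧ S (k - 1) ω < 0 ∧ 0 ≤ S k ω}) :
    ∀ y : ℤ, 0 ≤ y → μ {ω | y < X 0 ω} ≠ 0 →
      0 < μ {ω | S (T ω) ω = y} :=
  arithmetic_overshoot_positive_probability_general μ X hXmeas hIndep hIdent hInt hmean hspan x S hS
    T hT
end
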